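/- Let h: ℝ_+ → ℝ be monotonically increasing, μ a nonnegative measure on [0,∞), and define ψ(x) = ∫_0^∞ h(∏_{i=1}^n (t + x_i)) dμ(t) on strictly positive vectors x ∈ ℝ^n (assuming the integral is finite). If e_k(x) ≤ e_k(y) for all k = 1,…,n, then ψ(x) ≤ ψ(y). -/

import Mathlib

/-! For `t ≥ 0` the polynomial `∏ i, (t + x i)` has coefficients `e_k(x)` in front of the
nonnegative powers `t ^ (n - k)` (Vieta), so it is monotone in the elementary symmetric
polynomials; monotonicity of `h` and of the integral then give `ψ x ≤ ψ y`. -/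

open Finset Real MeasureTheory

noncomputable def esymm (n k : ℕ) (x : Fin n → ℝ) : ℝ :=
  ∑ s ∈ Finset.powersetCard k (Finset.univ : Finset (Fin n)), ∏ i ∈ s, x i

theorem esymm_zero (n : ℕ) (x : Fin n → ℝ) : esymm n 0 x = 1 := by
  simp [esymm]

open Polynomial in
theorem prod_add_eq_sum_esymm_mul_pow (n : ℕ) (x : Fin n → ℝ) (t : ℝ) :
    ∏ i, (t + x i) = ∑ k ∈ range (n + 1), esymm n k x * t ^ (n - k) := by
  have vieta := congrArg (eval t) (Multiset.prod_X_add_C_eq_sum_esymm (univ.val.map x))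
  simp only [eval_multiset_prod, Multiset.map_map, Function.comp_def, eval_add, eval_X, eval_C,
    eval_finsetSum, eval_mul, eval_pow, Multiset.card_map, card_val, card_univ, Fintype.card_fin,
    esymm_map_val] at vieta
  exact vieta

theorem prod_add_le_prod_add_of_esymm_le {n : ℕ} {x y : Fin n → ℝ}
    (hE : ∀ k, 1 ≤ k → k ≤ n → esymm n k x ≤ esymm n k y) {t : ℝ} (ht : 0 ≤ t) :
    ∏ i, (t + x i) ≤ ∏ i, (t + y i) := by
  rw [prod_add_eq_sum_esymm_mul_pow, prod_add_eq_sum_esymm_mul_pow]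
  refine sum_le_sum fun k hk => mul_le_mul_of_nonneg_right ?_ (pow_nonneg ht _)
  rcases Nat.eq_zero_or_pos k with rfl | hk_pos
  · rw [esymm_zero, esymm_zero]
  · exact hE k hk_pos (Nat.lt_succ_iff.mp (mem_range.mp hk))

theorem stmt_19 (n : ℕ) (h : ℝ → ℝ) (hmono : MonotoneOn h (Set.Ici (0 : ℝ)))
    (μ : Measure ℝ)
    (ψ : (Fin n → ℝ) → ℝ)
    (hψ : ∀ x : Fin n → ℝ, (∀ i, 0 < x i) →
      ψ x = ∫ t in Set.Ici (0 : ℝ), h (∏ i, (t + x i)) ∂μ)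
    (x y : Fin n → ℝ) (hx : ∀ i, 0 < x i) (hy : ∀ i, 0 < y i)
    (hintx : IntegrableOn (fun t => h (∏ i, (t + x i))) (Set.Ici (0 : ℝ)) μ)
    (hinty : IntegrableOn (fun t => h (∏ i, (t + y i))) (Set.Ici (0 : ℝ)) μ)
    (hE : ∀ k, 1 ≤ k → k ≤ n → esymm n k x ≤ esymm n k y) :
    ψ x ≤ ψ y := by
  rw [hψ x hx, hψ y hy]
  refine setIntegral_mono_on hintx hinty measurableSet_Ici fun t (ht : 0 ≤ t) => ?_
  have prod_nonneg {z : Fin n → ℝ} (hz : ∀ i, 0 < z i) : 0 ≤ ∏ i, (t + z i) :=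
    prod_nonneg fun i _ => add_nonneg ht (hz i).le
  exact hmono (prod_nonneg hx) (prod_nonneg hy) (prod_add_le_prod_add_of_esymm_le hE ht)
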